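/- arXiv:1809.01841 — 5 statements merged into one kernel-verified Lean document; each statement's English description precedes it below -/
import Mathlib

section
/- Let f : ℤ → ℂ be periodic with period q and suppose ∑_{a=1}^{q} f(a) = 0. Then the series ∑_{n=1}^{∞} f(n)/n converges and equals −∑_{x=1}^{q-1} f̂(x) log(1 − ζ_q^x), where f̂(x) = (1/q)∑_{a=1}^{q} f(a) ζ_q^{-ax} and log is the principal branch. -/
/-!
Fourier inversion on `ℤ/q` writes `f n = ∑_{x < q} f̂(x) ζ^{xn}`, so the partial sums
of `∑ f(n)/n` are the finite combination `∑_x f̂(x) ∑_{n ≤ N} (ζ^x)^n / n`. The term `x = 0` is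
the harmonic series, but its coefficient `f̂(0) = (1/q) ∑_a f(a)` vanishes. For `x ≠ 0`,
`z = ζ^x` is a point of the unit circle other than `1`: the partial sums of `∑ z^n` are
bounded, so Dirichlet's test makes `∑ z^n/n` converge, and Abel's limit theorem identifies the
sum with the boundary value `-log (1 - z)` of `-log (1 - w) = ∑ w^n/n` on the open disc.
-/

open Finset Filter Topology

lemma Finset.sum_Icc_one_eq_sum_range_succ {M : Type*} [AddCommMonoid M] (h : ℕ → M) (q : ℕ) :
    ∑ a ∈ Icc 1 q, h a = ∑ a ∈ range q, h (a + 1) := by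
  rw [range_eq_Ico, sum_Ico_add', zero_add, Ico_add_one_right_eq_Icc]

lemma Finset.sum_Icc_one_eq_sum_range {M : Type*} [AddCommMonoid M] {q : ℕ} (h : ℕ → M)
    (hq : h q = h 0) :
    ∑ a ∈ Icc 1 q, h a = ∑ a ∈ range q, h a := by
  rw [sum_Icc_one_eq_sum_range_succ]
  cases q with
  | zero => rfl
  | succ m => rw [sum_range_succ, hq, ← sum_range_succ']

namespace IsPrimitiveRoot

variable {K : Type*} [Field K] {ζ : K} {q : ℕ}

lemma sum_range_zpow_pow (hζ : IsPrimitiveRoot ζ q) (k : ℤ) :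
    ∑ x ∈ range q, (ζ ^ k) ^ x = if (q : ℤ) ∣ k then (q : K) else 0 := by
  split_ifs with hk
  · simp [(hζ.zpow_eq_one_iff_dvd k).2 hk]
  · have hq : (ζ ^ k) ^ q = 1 := by
      rw [← zpow_natCast, ← zpow_mul, mul_comm, zpow_mul, zpow_natCast, hζ.pow_eq_one,
        one_zpow]
    rw [geom_sum_eq (mt (hζ.zpow_eq_one_iff_dvd k).1 hk), hq, sub_self, zero_div]

end IsPrimitiveRoot

/-- The coefficient `f̂(x)` when `ζ = exp (2πi/q)`. -/
def dftCoeff {K : Type*} [Field K] (q : ℕ) (ζ : K) (f : ℤ → K) (x : ℕ) : K :=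
  (1 / (q : K)) * ∑ a ∈ Icc 1 q, f a * ζ ^ (-(a : ℤ) * x)

namespace Function.Periodic

variable {q : ℕ}

lemma sum_Icc_ite_dvd_sub {M : Type*} [AddCommMonoid M] {f : ℤ → M} (hf : Periodic f q)
    (hq : 0 < q) (n : ℤ) :
    ∑ a ∈ Icc 1 q, (if (q : ℤ) ∣ n - a then f a else 0) = f n := by
  rw [sum_Icc_one_eq_sum_range _ (by simp [hf.eq, dvd_sub_self_right])]
  have hr : 0 ≤ n % q := Int.emod_nonneg _ (by omega)
  have hrq : n % q < q := Int.emod_lt_of_pos _ (by omega)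
  have hdvd (a : ℕ) (ha : a ∈ range q) : (q : ℤ) ∣ n - a ↔ (n % q).toNat = a := by
    rw [← Int.modEq_iff_dvd, Int.ModEq,
      Int.emod_eq_of_lt (by omega) (by exact_mod_cast mem_range.1 ha)]
    omega
  rw [sum_congr rfl fun a ha ↦ by rw [if_congr (hdvd a ha) rfl rfl], sum_ite_eq,
    if_pos (mem_range.2 (by omega)), Int.toNat_of_nonneg hr, Int.emod_def, mul_comm]
  exact hf.sub_int_mul_eq _

section Field

variable {K : Type*} [Field K] {f : ℤ → K} {ζ : K}

lemma eq_sum_dftCoeff_mul_zpow (hf : Periodic f q) (hq : 0 < q) (hζ : IsPrimitiveRoot ζ q)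
    (n : ℤ) : f n = ∑ x ∈ range q, dftCoeff q ζ f x * (ζ ^ x) ^ n := by
  have hζ0 : ζ ≠ 0 := hζ.ne_zero hq.ne'
  have hq0 : (q : K) ≠ 0 := by
    have := NeZero.of_pos hq
    exact hζ.neZero'.out
  have hterm (a x : ℕ) : ζ ^ (-(a : ℤ) * x) * (ζ ^ x) ^ n = (ζ ^ (n - a)) ^ x := by
    rw [← zpow_natCast, ← zpow_mul, ← zpow_add₀ hζ0, ← zpow_natCast, ← zpow_mul]
    ring_nf
  calc f n = ∑ a ∈ Icc 1 q, (if (q : ℤ) ∣ n - a then f a else 0) :=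
        (hf.sum_Icc_ite_dvd_sub hq n).symm
    _ = 1 / q * ∑ a ∈ Icc 1 q, f a * ∑ x ∈ range q, (ζ ^ (n - a)) ^ x := by
        simp_rw [hζ.sum_range_zpow_pow, mul_ite, mul_zero, mul_sum]
        refine sum_congr rfl fun a _ ↦ ?_
        rw [mul_ite, mul_zero, mul_left_comm, one_div_mul_cancel hq0, mul_one]
    _ = ∑ x ∈ range q, dftCoeff q ζ f x * (ζ ^ x) ^ n := by
        simp_rw [dftCoeff, mul_assoc, sum_mul, mul_assoc, hterm, mul_sum]
        exact sum_comm

lemma sum_Icc_div_eq_sum_dftCoeff_mul (hf : Periodic f q) (hq : 0 < q)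
    (hζ : IsPrimitiveRoot ζ q) (N : ℕ) : ∑ n ∈ Icc 1 N, f n / n =
      ∑ x ∈ range q, dftCoeff q ζ f x * ∑ n ∈ Icc 1 N, (ζ ^ x) ^ n / n := by
  simp_rw [mul_sum, ← mul_div_assoc]
  rw [sum_comm]
  refine sum_congr rfl fun n _ ↦ ?_
  rw [← sum_div, hf.eq_sum_dftCoeff_mul_zpow hq hζ n]
  simp only [zpow_natCast]

end Field

end Function.Periodic

namespace Complex

open scoped ComplexOrder in
lemma one_sub_mem_slitPlane_of_norm_le_one {z : ℂ} (hz : ‖z‖ ≤ 1) (hz1 : z ≠ 1) :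
    1 - z ∈ slitPlane := by
  rw [mem_slitPlane_iff_not_le_zero, sub_nonpos]
  intro h
  obtain ⟨hre, him⟩ := le_def.1 h
  have : z.re = ‖z‖ := re_eq_norm.2 (zero_le_one.trans h)
  exact hz1 (ext (by rw [one_re] at hre ⊢; linarith) (by simpa using him.symm))

lemma norm_sum_range_pow_le {z : ℂ} (hz : ‖z‖ ≤ 1) (hz1 : z ≠ 1) (n : ℕ) :
    ‖∑ i ∈ range n, z ^ i‖ ≤ 2 / ‖z - 1‖ := by
  rw [geom_sum_eq hz1, norm_div]
  gcongr
  calc ‖z ^ n - 1‖ ≤ ‖z‖ ^ n + ‖(1 : ℂ)‖ := norm_pow z n ▸ norm_sub_le _ _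
    _ ≤ 1 + 1 := by rw [norm_one]; gcongr; exact pow_le_one₀ (norm_nonneg z) hz
    _ = 2 := one_add_one_eq_two

lemma cauchySeq_sum_range_pow_div {z : ℂ} (hz : ‖z‖ ≤ 1) (hz1 : z ≠ 1) :
    CauchySeq fun N : ℕ ↦ ∑ n ∈ range N, z ^ n / n := by
  have hanti : Antitone fun n : ℕ ↦ ((n : ℝ) + 1)⁻¹ := fun m n hmn ↦ by
    dsimp only; gcongr
  have hzero : Tendsto (fun n : ℕ ↦ ((n : ℝ) + 1)⁻¹) atTop (𝓝 0) := by
    simpa [one_div] using tendsto_one_div_add_atTop_nhds_zero_nat (𝕜 := ℝ)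
  have hbound (n : ℕ) : ‖∑ i ∈ range n, z ^ (i + 1)‖ ≤ 2 / ‖z - 1‖ := by
    simp_rw [pow_succ', ← mul_sum, norm_mul]
    exact (mul_le_of_le_one_left (norm_nonneg _) hz).trans (norm_sum_range_pow_le hz hz1 n)
  rw [← cauchySeq_shift 1]
  convert hanti.cauchySeq_series_mul_of_tendsto_zero_of_bounded hzero hbound using 2 with N
  rw [sum_range_succ']
  simp [div_eq_inv_mul]

lemma tendsto_sum_range_pow_div {z : ℂ} (hz : ‖z‖ ≤ 1) (hz1 : z ≠ 1) :
    Tendsto (fun N : ℕ ↦ ∑ n ∈ range N, z ^ n / n) atTop (𝓝 (-log (1 - z))) := by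
  obtain ⟨l, hl⟩ := cauchySeq_tendsto_of_complete (cauchySeq_sum_range_pow_div hz hz1)
  have habel := tendsto_tsum_powerSeries_nhdsWithin_lt hl
  have hlog : Tendsto (fun w : ℂ ↦ -log (1 - w * z)) ((𝓝[<] (1 : ℝ)).map ofReal)
      (𝓝 (-log (1 - z))) := by
    have hcont : ContinuousAt (fun w : ℂ ↦ -log (1 - w * z)) 1 := by
      refine (continuousAt_clog ?_).comp (by fun_prop) |>.neg
      simpa using one_sub_mem_slitPlane_of_norm_le_one hz hz1
    have hle : Tendsto ofReal (𝓝[<] 1) (𝓝 1) := by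
      simpa using (continuous_ofReal.tendsto 1).mono_left nhdsWithin_le_nhds
    simpa using hcont.tendsto.mono_left hle
  have heq : (fun w : ℂ ↦ ∑' n : ℕ, z ^ n / n * w ^ n) =ᶠ[(𝓝[<] (1 : ℝ)).map ofReal]
      fun w ↦ -log (1 - w * z) := by
    rw [EventuallyEq, eventually_map]
    filter_upwards [Ioo_mem_nhdsLT (show (-1 : ℝ) < 1 by norm_num)] with x hx
    have hxz : ‖(x : ℂ) * z‖ < 1 := by
      rw [norm_mul, norm_real, Real.norm_eq_abs]
      exact (mul_le_of_le_one_right (abs_nonneg x) hz).trans_lt (abs_lt.2 hx)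
    simp_rw [div_mul_eq_mul_div, ← mul_pow, mul_comm z]
    exact (hasSum_taylorSeries_neg_log hxz).tsum_eq
  rwa [tendsto_nhds_unique (habel.congr' heq) hlog] at hl

lemma tendsto_sum_Icc_pow_div {z : ℂ} (hz : ‖z‖ ≤ 1) (hz1 : z ≠ 1) :
    Tendsto (fun N : ℕ ↦ ∑ n ∈ Icc 1 N, z ^ n / n) atTop (𝓝 (-log (1 - z))) := by
  refine ((tendsto_sum_range_pow_div hz hz1).comp (tendsto_add_atTop_nat 1)).congr fun N ↦ ?_
  simp [sum_range_succ', sum_Icc_one_eq_sum_range_succ]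

end Complex

theorem L_one_as_linear_form_in_logs (q : ℕ) (hq : 0 < q) (f : ℤ → ℂ)
    (hper : ∀ n : ℤ, f (n + q) = f n)
    (hsum : ∑ a ∈ Finset.Icc 1 q, f a = 0) :
    Tendsto (fun N : ℕ => ∑ n ∈ Finset.Icc 1 N, f n / n) atTop
      (nhds (- ∑ x ∈ Finset.Icc 1 (q - 1),
        ((1 / (q : ℂ)) * ∑ a ∈ Finset.Icc 1 q,
          f a * Complex.exp (2 * Real.pi * Complex.I / q) ^ (-(a : ℤ) * x)) *
        Complex.log (1 - Complex.exp (2 * Real.pi * Complex.I / q) ^ (x : ℕ)))) := by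
  set ζ := Complex.exp (2 * Real.pi * Complex.I / q)
  have hζ : IsPrimitiveRoot ζ q := Complex.isPrimitiveRoot_exp q hq.ne'
  have hc0 : dftCoeff q ζ f 0 = 0 := by simp [dftCoeff, hsum]
  have hlim (x : ℕ) (hx : x ∈ range q) :
      Tendsto (fun N : ℕ ↦ dftCoeff q ζ f x * ∑ n ∈ Icc 1 N, (ζ ^ x) ^ n / n) atTop
        (𝓝 (dftCoeff q ζ f x * -Complex.log (1 - ζ ^ x))) := by
    rcases x.eq_zero_or_pos with rfl | hx0
    · simp [hc0]
    refine (Complex.tendsto_sum_Icc_pow_div ?_ ?_).const_mul _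
    · rw [norm_pow, hζ.norm'_eq_one hq.ne', one_pow]
    · exact hζ.pow_ne_one_of_pos_of_lt hx0.ne' (mem_range.1 hx)
  have hlimit : -∑ x ∈ Icc 1 (q - 1), dftCoeff q ζ f x * Complex.log (1 - ζ ^ x) =
      ∑ x ∈ range q, dftCoeff q ζ f x * -Complex.log (1 - ζ ^ x) := by
    rw [sum_range_eq_add_Ico _ hq, hc0, zero_mul, zero_add,
      Icc_sub_one_right_eq_Ico_of_not_isMin (by simp [hq.ne']), ← sum_neg_distrib]
    simp_rw [mul_neg]
  exact (hlimit ▸ tendsto_finsetSum _ hlim).congr fun N ↦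
    (Function.Periodic.sum_Icc_div_eq_sum_dftCoeff_mul hper hq hζ N).symm
end

section
/- Let f be an odd algebraic-valued arithmetical function, periodic with period q, such that L(1,f) = ∑_{n≥1} f(n)/n converges. Then L(1,f) = −(iπ/q) ∑_{x=1}^{q-1} x f̂(x). In particular, L(1,f) = 0 if and only if ∑_{x=1}^{q-1} x f̂(x) = 0. -/
/-!
Fourier inversion writes `f(n) = ∑ₓ f̂(x) ζˣⁿ` with `ζ = e^{2πi/q}`, so the partial sums of
`L(1, f)` are combinations of the partial sums of `∑ wⁿ/n` at the roots of unity `w = ζˣ ≠ 1`.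
On the unit circle this series still converges (Dirichlet's test), and Abel's limit theorem
identifies its sum as `-log(1 - w)`. Since `f` is odd so is `f̂`, and the terms
`f̂(x) log |1 - ζˣ|` cancel against those at `-x`; what remains comes from
`arg(1 - ζˣ) = πx/q - π/2`, and the constant `π/2` drops out because `∑ₓ f̂(x) = 0`.
-/

open Finset Filter Complex Topology
open scoped Real ComplexOrder

namespace Complex

theorem norm_sum_range_pow_succ_le {w : ℂ} (hw : ‖w‖ = 1) (hw1 : w ≠ 1) (N : ℕ) :
    ‖∑ n ∈ range N, w ^ (n + 1)‖ ≤ 2 / ‖w - 1‖ := by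
  have hsum : ∑ n ∈ range N, w ^ (n + 1) = w * ((w ^ N - 1) / (w - 1)) := by
    simp only [← geom_sum_eq hw1, mul_sum, pow_succ']
  rw [hsum, norm_mul, hw, one_mul, norm_div]
  gcongr
  calc ‖w ^ N - 1‖ ≤ ‖w ^ N‖ + ‖(1 : ℂ)‖ := norm_sub_le _ _
    _ = 2 := by rw [norm_pow, hw]; norm_num

theorem cauchySeq_sum_range_pow_div_nat {w : ℂ} (hw : ‖w‖ = 1) (hw1 : w ≠ 1) :
    CauchySeq fun N : ℕ => ∑ n ∈ range N, w ^ n / n := by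
  have hanti : Antitone fun n : ℕ => 1 / ((n : ℝ) + 1) := fun a b hab => by
    dsimp only; gcongr
  have hdirichlet := hanti.cauchySeq_series_mul_of_tendsto_zero_of_bounded
    tendsto_one_div_add_atTop_nhds_zero_nat (norm_sum_range_pow_succ_le hw hw1)
  rw [← cauchySeq_shift 1]
  convert hdirichlet using 2 with N
  rw [sum_range_succ']
  simp [real_smul, div_eq_inv_mul]

theorem re_lt_one_of_norm_eq_one {w : ℂ} (hw : ‖w‖ = 1) (hw1 : w ≠ 1) : w.re < 1 := by
  refine (hw ▸ re_le_norm w).lt_of_ne fun hre => hw1 ?_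
  rw [eq_coe_norm_of_nonneg (re_eq_norm.mp (hre.trans hw.symm)), hw, ofReal_one]

theorem tendsto_sum_range_pow_div_nat {w : ℂ} (hw : ‖w‖ = 1) (hw1 : w ≠ 1) :
    Tendsto (fun N : ℕ => ∑ n ∈ range N, w ^ n / n) atTop (𝓝 (-log (1 - w))) := by
  obtain ⟨l, hl⟩ := cauchySeq_tendsto_of_complete (cauchySeq_sum_range_pow_div_nat hw hw1)
  have hslit : 1 - w * 1 ∈ slitPlane := by
    rw [mul_one]; left; simpa using re_lt_one_of_norm_eq_one hw hw1
  have hcont : ContinuousAt (fun z : ℂ => -log (1 - w * z)) 1 :=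
    ((continuousAt_const.sub (continuousAt_const.mul continuousAt_id)).clog hslit).neg
  have habel : Tendsto (fun z : ℂ => -log (1 - w * z)) ((𝓝[<] 1).map ofReal) (𝓝 l) := by
    refine (tendsto_tsum_powerSeries_nhdsWithin_lt hl).congr' ?_
    rw [EventuallyEq, eventually_map]
    filter_upwards [Ioo_mem_nhdsLT (show (-1 : ℝ) < 1 by norm_num)] with r hr
    have hwr : ‖w * r‖ < 1 := by
      rw [norm_mul, hw, one_mul, norm_real, Real.norm_eq_abs, abs_lt]; exact hr
    rw [← (hasSum_taylorSeries_neg_log hwr).tsum_eq]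
    congr 1 with n
    ring
  have hlim : Tendsto (fun z : ℂ => -log (1 - w * z)) ((𝓝[<] 1).map ofReal)
      (𝓝 (-log (1 - w))) := by
    have hofReal : Tendsto ofReal (𝓝[<] (1 : ℝ)) (𝓝 1) := by
      simpa using (continuous_ofReal.tendsto 1).mono_left nhdsWithin_le_nhds
    simpa only [mul_one] using hcont.tendsto.mono_left hofReal
  rwa [tendsto_nhds_unique habel hlim] at hl

theorem one_sub_exp_mul_I (θ : ℝ) :
    1 - exp (θ * I) = ↑(2 * Real.sin (θ / 2)) * exp (↑((θ - π) / 2) * I) := by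
  have hθ : exp (θ * I) = exp (↑(θ / 2) * I) ^ 2 := by
    rw [← exp_nat_mul]; push_cast; ring_nf
  have hsin : (Real.sin (θ / 2) : ℂ) = (exp (-(↑(θ / 2) * I)) - exp (↑(θ / 2) * I)) * I / 2 := by
    rw [ofReal_sin, sin]; push_cast; ring_nf
  have hrot : exp (↑((θ - π) / 2) * I) = exp (↑(θ / 2) * I) * -I := by
    rw [show (↑((θ - π) / 2) * I : ℂ) = ↑(θ / 2) * I + ↑(-(π / 2)) * I by push_cast; ring,
      exp_add, exp_mul_I (↑(-(π / 2)))]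
    simp
  rw [hθ, ofReal_mul, ofReal_ofNat, hsin, hrot, exp_neg]
  have hu : exp (↑(θ / 2) * I) ≠ 0 := exp_ne_zero _
  field_simp
  linear_combination (1 - exp (↑(θ / 2) * I) ^ 2) * I_sq

theorem arg_one_sub_exp_mul_I {θ : ℝ} (h0 : 0 < θ) (h2π : θ < 2 * π) :
    arg (1 - exp (θ * I)) = (θ - π) / 2 := by
  have hsin : 0 < Real.sin (θ / 2) := Real.sin_pos_of_pos_of_lt_pi (by linarith) (by linarith)
  rw [one_sub_exp_mul_I, arg_real_mul _ (by positivity), exp_mul_I,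
    arg_cos_add_sin_mul_I ⟨by linarith [Real.pi_pos], by linarith [Real.pi_pos]⟩]

end Complex

namespace ZMod

theorem sum_comp_val {M : Type*} [AddCommMonoid M] {q : ℕ} [NeZero q] (g : ℕ → M) :
    ∑ j : ZMod q, g j.val = ∑ x ∈ range q, g x := by
  obtain ⟨k, rfl⟩ := Nat.exists_eq_succ_of_ne_zero (NeZero.ne q)
  exact Fin.sum_univ_eq_sum_range g (k + 1)

variable {q : ℕ} [NeZero q]

theorem arg_one_sub_stdAddChar {k : ZMod q} (hk : k ≠ 0) :
    arg (1 - stdAddChar k) = π * k.val / q - π / 2 := by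
  have hq : (0 : ℝ) < q := Nat.cast_pos.mpr (NeZero.pos q)
  have hval : 0 < (k.val : ℝ) := Nat.cast_pos.mpr (val_pos.mpr hk)
  have hval_lt : (k.val : ℝ) < q := Nat.cast_lt.mpr (val_lt k)
  have hexp : stdAddChar k = exp (↑(2 * π * k.val / q) * I) := by
    rw [stdAddChar_apply, toCircle_apply]; push_cast; ring_nf
  rw [hexp, arg_one_sub_exp_mul_I (by positivity)]
  · field_simp
  · rw [div_lt_iff₀ hq]; nlinarith [Real.pi_pos]

theorem norm_one_sub_stdAddChar_neg (k : ZMod q) :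
    ‖1 - stdAddChar (-k)‖ = ‖1 - stdAddChar k‖ := by
  rw [AddChar.map_neg_eq_conj, ← norm_conj, map_sub, map_one, conj_conj]

theorem tendsto_sum_range_stdAddChar_pow_div_nat {k : ZMod q} (hk : k ≠ 0) :
    Tendsto (fun N : ℕ => ∑ n ∈ range N, stdAddChar k ^ n / n) atTop
      (𝓝 (-log (1 - stdAddChar k))) :=
  tendsto_sum_range_pow_div_nat (AddChar.norm_apply _ _) fun h =>
    hk (injective_stdAddChar (h.trans (AddChar.map_zero_eq_one _).symm))

theorem sum_mul_log_one_sub_stdAddChar_of_odd {c : ZMod q → ℂ} (hc : c.Odd) :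
    ∑ k, c k * log (1 - stdAddChar k) = I * π / q * ∑ k, k.val * c k := by
  have hnorm : ∑ k, c k * Real.log ‖1 - stdAddChar k‖ = 0 :=
    Function.Odd.sum_eq_zero fun k => by rw [hc k, norm_one_sub_stdAddChar_neg, neg_mul]
  have harg : ∀ k, c k * (arg (1 - stdAddChar k) * I) =
      I * π / q * (k.val * c k) - I * π / 2 * c k := by
    intro k
    rcases eq_or_ne k 0 with rfl | hk
    · simp [hc.map_zero]
    · rw [arg_one_sub_stdAddChar hk]; push_cast; ring
  simp only [log, mul_add, sum_add_distrib, hnorm, harg, sum_sub_distrib, ← mul_sum,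
    hc.sum_eq_zero, mul_zero, zero_add, sub_zero]

theorem eq_sum_dft_mul_stdAddChar_pow (Φ : ZMod q → ℂ) (n : ℕ) :
    Φ n = ∑ k, (q : ℂ)⁻¹ * 𝓕 Φ k * stdAddChar k ^ n := by
  conv_lhs => rw [← dft.symm_apply_apply Φ, invDFT_apply, smul_eq_mul, mul_sum]
  refine sum_congr rfl fun k _ => ?_
  rw [smul_eq_mul, ← AddChar.map_nsmul_eq_pow, nsmul_eq_mul, mul_comm k]
  ring

theorem tendsto_sum_range_div_nat_of_odd {Φ : ZMod q → ℂ} (hΦ : Φ.Odd) :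
    Tendsto (fun N : ℕ => ∑ n ∈ range N, Φ n / n) atTop
      (𝓝 (-(I * π / q) * ∑ k, k.val * ((q : ℂ)⁻¹ * 𝓕 Φ k))) := by
  set c : ZMod q → ℂ := fun k => (q : ℂ)⁻¹ * 𝓕 Φ k
  have hc : c.Odd := fun k => by simp only [c, dft_odd_iff.mpr hΦ k, mul_neg]
  have hpartial : ∀ N : ℕ, ∑ n ∈ range N, Φ n / n =
      ∑ k, c k * ∑ n ∈ range N, stdAddChar k ^ n / n := by
    intro N
    simp only [eq_sum_dft_mul_stdAddChar_pow Φ, sum_div, mul_sum, mul_div_assoc]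
    exact sum_comm
  have hlim : Tendsto (fun N : ℕ => ∑ n ∈ range N, Φ n / n) atTop
      (𝓝 (∑ k, c k * -log (1 - stdAddChar k))) := by
    simp only [hpartial]
    refine tendsto_finsetSum _ fun k _ => ?_
    rcases eq_or_ne k 0 with rfl | hk
    · simp [hc.map_zero]
    · exact (tendsto_sum_range_stdAddChar_pow_div_nat hk).const_mul _
  convert hlim using 2
  simp only [mul_neg, sum_neg_distrib, sum_mul_log_one_sub_stdAddChar_of_odd hc]
  ring

end ZMod

namespace Function.Periodic

variable {M : Type*} {q : ℕ} [NeZero q] {g : ℤ → M}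

theorem map_val_intCast (hg : Periodic g q) (n : ℤ) : g ((n : ZMod q).val) = g n := by
  rw [ZMod.val_intCast, Int.emod_def, mul_comm]
  exact hg.sub_int_mul_eq _

theorem sum_Icc_one_eq_sum_val [AddCommMonoid M] (hg : Periodic g q) :
    ∑ a ∈ Icc 1 q, g a = ∑ j : ZMod q, g j.val := by
  have hq : 1 ≤ q := NeZero.one_le
  rw [ZMod.sum_comp_val fun x => g x, sum_range_eq_add_Ico _ hq, ← Ico_add_one_right_eq_Icc,
    sum_Ico_succ_top hq, add_comm, Nat.cast_zero, ← hg 0, zero_add]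

theorem sum_Icc_one_mul_exp_zpow_eq_dft {f : ℤ → ℂ} (hf : Periodic f q) (x : ℤ) :
    ∑ a ∈ Icc 1 q, f a * exp (2 * π * I / q) ^ (-a * x) =
      ZMod.dft (fun j : ZMod q => f j.val) x := by
  have hζ : ∀ m : ℤ, exp (2 * π * I / q) ^ m = ZMod.stdAddChar (m : ZMod q) := fun m => by
    rw [ZMod.stdAddChar_coe, ← exp_int_mul]; ring_nf
  have hper : Periodic (fun a : ℤ => f a * ZMod.stdAddChar ((-a * x : ℤ) : ZMod q)) q :=
    fun a => by simp [hf a]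
  simp only [hζ]
  rw [hper.sum_Icc_one_eq_sum_val, ZMod.dft_apply]
  refine sum_congr rfl fun j _ => ?_
  simp [mul_comm]

end Function.Periodic

theorem odd_L_one_formula_general (q : ℕ) (hq : 0 < q) (f : ℤ → ℂ)
    (hper : ∀ n : ℤ, f (n + q) = f n) (hodd : ∀ n : ℤ, f (-n) = -f n)
    (L : ℂ)
    (hL : Tendsto (fun N : ℕ => ∑ n ∈ Finset.Icc 1 N, f n / n) atTop (nhds L))
    (fhat : ℤ → ℂ)
    (hfhat : ∀ x : ℤ, fhat x = (1 / (q : ℂ)) * ∑ a ∈ Finset.Icc 1 q,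
      f a * Complex.exp (2 * Real.pi * Complex.I / q) ^ (-(a : ℤ) * x)) :
    L = -(Complex.I * Real.pi / q) * ∑ x ∈ Finset.Icc 1 (q - 1), (x : ℂ) * fhat x ∧
      (L = 0 ↔ ∑ x ∈ Finset.Icc 1 (q - 1), (x : ℂ) * fhat x = 0) := by
  have : NeZero q := ⟨hq.ne'⟩
  set Φ : ZMod q → ℂ := fun j => f j.val
  have hfΦ : ∀ n : ℤ, Φ n = f n := Function.Periodic.map_val_intCast hper
  have hΦ : Φ.Odd := fun j => by
    rw [show -j = (↑(-(j.val : ℤ)) : ZMod q) by simp, hfΦ, hodd]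
  have hfhat' : ∀ x : ℤ, fhat x = (q : ℂ)⁻¹ * ZMod.dft Φ x := fun x => by
    rw [hfhat, one_div, Function.Periodic.sum_Icc_one_mul_exp_zpow_eq_dft hper]
  have hlim : Tendsto (fun N : ℕ => ∑ n ∈ range N, Φ n / n) atTop (𝓝 L) := by
    refine (tendsto_add_atTop_iff_nat 1).mp (hL.congr fun N => ?_)
    rw [sum_range_eq_add_Ico _ (by omega : 0 < N + 1), Ico_add_one_right_eq_Icc]
    simp [← hfΦ]
  have hsum : ∑ k : ZMod q, k.val * ((q : ℂ)⁻¹ * ZMod.dft Φ k) =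
      ∑ x ∈ Icc 1 (q - 1), (x : ℂ) * fhat x := by
    calc _ = ∑ x ∈ range q, (x : ℂ) * fhat x := by
          rw [← ZMod.sum_comp_val fun x => (x : ℂ) * fhat x]
          simp [hfhat']
      _ = _ := by
          rw [sum_range_eq_add_Ico _ hq, (by grind : Icc 1 (q - 1) = Ico 1 q)]
          simp
  have hformula := tendsto_nhds_unique hlim (ZMod.tendsto_sum_range_div_nat_of_odd hΦ)
  rw [hsum] at hformula
  refine ⟨hformula, ?_⟩
  rw [hformula, mul_eq_zero, or_iff_right (by simp [Real.pi_ne_zero, hq.ne'])]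

theorem odd_L_one_formula (q : ℕ) (hq : 0 < q) (f : ℤ → ℂ)
    (hper : ∀ n : ℤ, f (n + q) = f n) (hodd : ∀ n : ℤ, f (-n) = -f n)
    (halg : ∀ n : ℤ, IsAlgebraic ℚ (f n))
    (L : ℂ)
    (hL : Tendsto (fun N : ℕ => ∑ n ∈ Finset.Icc 1 N, f n / n) atTop (nhds L))
    (fhat : ℤ → ℂ)
    (hfhat : ∀ x : ℤ, fhat x = (1 / (q : ℂ)) * ∑ a ∈ Finset.Icc 1 q,
      f a * Complex.exp (2 * Real.pi * Complex.I / q) ^ (-(a : ℤ) * x)) :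
    L = -(Complex.I * Real.pi / q) * ∑ x ∈ Finset.Icc 1 (q - 1), (x : ℂ) * fhat x ∧
      (L = 0 ↔ ∑ x ∈ Finset.Icc 1 (q - 1), (x : ℂ) * fhat x = 0) :=
  odd_L_one_formula_general q hq f hper hodd L hL fhat hfhat
end

section
/- Let f be an odd function periodic with period q with L(1,f) convergent. Then ∑_{x=1}^{q-1} x f̂(x) = ∑_{n=1}^{q-1} f(n) ζ_q^n/(1 − ζ_q^n), where f̂ is the Fourier transform of f and ζ_q = e^{2πi/q}. -/
/-! Expanding `fhat` and swapping the two sums leaves, for each `1 ≤ a < q`, the weighted geometric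
sum `∑ x z ^ x` over the `q`-th root of unity `z = ζ ^ (-a) ≠ 1`; multiplying it by `z - 1` telescopes
to `q`. The term `a = q` drops out because `f q = f 0 = 0` for odd periodic `f`. -/

open Finset

theorem mul_sub_one_sum_range_natCast_mul_pow {R : Type*} [CommRing R] (z : R) (n : ℕ) :
    (z - 1) * ∑ x ∈ range n, (x : R) * z ^ x = (n - 1) * z ^ n - ∑ x ∈ range n, z ^ x + 1 := by
  induction n with
  | zero => simp
  | succ n ih =>
    rw [sum_range_succ, sum_range_succ, mul_add, ih]
    push_cast
    ring

theorem sum_range_natCast_mul_pow_of_pow_eq_one {K : Type*} [Field K] {z : K} {n : ℕ}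
    (hzn : z ^ n = 1) (hz : z ≠ 1) :
    ∑ x ∈ range n, (x : K) * z ^ x = n / (z - 1) := by
  have hz1 : z - 1 ≠ 0 := sub_ne_zero.mpr hz
  have hgeom : ∑ x ∈ range n, z ^ x = 0 := by
    simpa [hzn, hz1] using geom_sum_mul z n
  have h := mul_sub_one_sum_range_natCast_mul_pow z n
  rw [hzn, hgeom] at h
  rw [eq_div_iff hz1, mul_comm, h]
  ring

theorem sum_Icc_natCast_mul_zpow_neg_mul_of_pow_eq_one {K : Type*} [Field K] {ζ : K} {n : ℕ}
    (hζn : ζ ^ n = 1) {a : ℤ} (ha : ζ ^ a ≠ 1) :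
    ∑ x ∈ Icc 1 (n - 1), (x : K) * ζ ^ (-a * x) = n * ζ ^ a / (1 - ζ ^ a) := by
  rcases Nat.eq_zero_or_pos n with rfl | hn
  · simp
  have hζ : ζ ≠ 0 := by
    rintro rfl
    simp [hn.ne'] at hζn
  have hIcc : Icc 1 (n - 1) = Ico 1 n :=
    Icc_sub_one_right_eq_Ico_of_not_isMin (by simpa using hn.ne') 1
  set z := (ζ ^ a)⁻¹
  have hpow (x : ℕ) : ζ ^ (-a * x) = z ^ x := by
    rw [zpow_mul, zpow_neg, zpow_natCast]
  have hzn : z ^ n = 1 := by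
    rw [← hpow, mul_comm, zpow_mul, zpow_natCast, hζn, one_zpow]
  have hz : z ≠ 1 := inv_ne_one.mpr ha
  calc ∑ x ∈ Icc 1 (n - 1), (x : K) * ζ ^ (-a * x)
      = ∑ x ∈ range n, (x : K) * z ^ x := by
        simp only [hpow, hIcc, sum_range_eq_add_Ico _ hn, Nat.cast_zero, zero_mul, zero_add]
    _ = n / (z - 1) := sum_range_natCast_mul_pow_of_pow_eq_one hzn hz
    _ = n * ζ ^ a / (1 - ζ ^ a) := by
        have hζa : ζ ^ a ≠ 0 := zpow_ne_zero a hζ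
        have hden : 1 - ζ ^ a ≠ 0 := sub_ne_zero.mpr ha.symm
        simp only [z]
        field_simp

theorem odd_weighted_fourier_sum (q : ℕ) (hq : 2 ≤ q) (f : ℤ → ℂ)
    (hper : ∀ n : ℤ, f (n + q) = f n) (hodd : ∀ n : ℤ, f (-n) = -f n)
    (fhat : ℤ → ℂ)
    (hfhat : ∀ x : ℤ, fhat x = (1 / (q : ℂ)) * ∑ a ∈ Finset.Icc 1 q,
      f a * Complex.exp (2 * Real.pi * Complex.I / q) ^ (-(a : ℤ) * x)) :
    ∑ x ∈ Finset.Icc 1 (q - 1), (x : ℂ) * fhat x =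
      ∑ n ∈ Finset.Icc 1 (q - 1),
        f n * Complex.exp (2 * Real.pi * Complex.I / q) ^ (n : ℕ) /
          (1 - Complex.exp (2 * Real.pi * Complex.I / q) ^ (n : ℕ)) := by
  set ζ := Complex.exp (2 * Real.pi * Complex.I / q)
  have hζ : IsPrimitiveRoot ζ q := Complex.isPrimitiveRoot_exp q (by omega)
  have hfq : f q = 0 := by
    have h0 : f 0 = 0 := CharZero.eq_neg_self_iff.mp (by simpa using hodd 0)
    simpa [h0] using hper 0
  have hq0 : (q : ℂ) ≠ 0 := by exact_mod_cast (by omega : q ≠ 0)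
  calc ∑ x ∈ Icc 1 (q - 1), (x : ℂ) * fhat x
      = ∑ a ∈ Icc 1 q, f a / q * ∑ x ∈ Icc 1 (q - 1), (x : ℂ) * ζ ^ (-(a : ℤ) * x) := by
        simp only [hfhat, mul_sum]
        rw [sum_comm]
        refine sum_congr rfl fun a _ => sum_congr rfl fun x _ => by ring
    _ = ∑ a ∈ Icc 1 (q - 1), f a / q * ∑ x ∈ Icc 1 (q - 1), (x : ℂ) * ζ ^ (-(a : ℤ) * x) := by
        rw [← insert_Icc_sub_one_right_eq_Icc (by omega : 1 ≤ q),
          sum_insert (by rw [mem_Icc]; omega)]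
        simp [hfq]
    _ = ∑ n ∈ Icc 1 (q - 1), f n * ζ ^ n / (1 - ζ ^ n) := by
        refine sum_congr rfl fun a ha => ?_
        rw [mem_Icc] at ha
        have hζa : ζ ^ (a : ℤ) ≠ 1 := by
          rw [zpow_natCast]
          exact hζ.pow_ne_one_of_pos_of_lt (by omega) (by omega)
        rw [sum_Icc_natCast_mul_zpow_neg_mul_of_pow_eq_one hζ.pow_eq_one hζa, zpow_natCast]
        field_simp
end

section
/- Let p be a prime and define f : ℤ → ℤ periodic mod p² by f(n) = 1 if p ∤ n, f(n) = 1 − 2p if p | n but p² ∤ n, and f(n) = (p−1)² if p² | n. Then ∑_{a=1}^{p²} f(a) = 0 and ∑_{n=1}^{∞} f(n)/n = 0. -/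
/-!
Expanding `(1 - p ^ (1 - s)) ^ 2` shows `f n = 1 - 2p [p ∣ n] + p² [p² ∣ n]`. Against the weight
`1` over one period this sums to `p² - 2p · p + p² · 1 = 0`; against `1 / n` up to `N` it gives
`H N - 2 H (N / p) + H (N / p²)` with `H` the harmonic numbers. Since `H N = log N + γ + o(1)`,
`H (N / d) - H N → -log d`, so the partial sums tend to `-log p² + 2 log p = 0`.
-/

open Finset Filter Topology Real

lemma Nat.sum_Icc_filter_dvd {M : Type*} [AddCommMonoid M] (g : ℕ → M) (d N : ℕ) :
    ∑ n ∈ Icc 1 N with d ∣ n, g n = ∑ m ∈ Icc 1 (N / d), g (d * m) := by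
  rcases d.eq_zero_or_pos with rfl | hd
  · rw [Nat.div_zero, Icc_eq_empty_of_lt zero_lt_one, sum_empty]
    exact sum_eq_zero fun n hn => by grind
  rw [← sum_image fun a _ b _ h => Nat.eq_of_mul_eq_mul_left hd h]
  congr 1
  ext n
  simp only [mem_filter, mem_Icc, mem_image]
  constructor
  · rintro ⟨⟨h1, hN⟩, m, rfl⟩
    exact ⟨m, ⟨Nat.pos_of_mul_pos_left h1, (Nat.le_div_iff_mul_le hd).2 (by linarith)⟩, rfl⟩
  · rintro ⟨m, ⟨hm, hmN⟩, rfl⟩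
    refine ⟨⟨Nat.mul_pos hd hm, ?_⟩, dvd_mul_right d m⟩
    linarith [(Nat.le_div_iff_mul_le hd).1 hmN]

lemma Real.tendsto_log_natFloor_sub_log :
    Tendsto (fun x : ℝ => log ⌊x⌋₊ - log x) atTop (𝓝 0) := by
  have h := (continuousAt_log one_ne_zero).tendsto.comp tendsto_nat_floor_div_atTop
  rw [log_one] at h
  refine h.congr' ?_
  filter_upwards [eventually_ge_atTop 1] with x hx
  have : (0 : ℝ) < ⌊x⌋₊ := by exact_mod_cast Nat.floor_pos.mpr hx
  rw [Function.comp_apply, log_div this.ne' (by positivity)]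

lemma tendsto_harmonic_div_sub_harmonic {d : ℕ} (hd : d ≠ 0) :
    Tendsto (fun N : ℕ => (harmonic (N / d) : ℝ) - harmonic N) atTop (𝓝 (-log d)) := by
  have hlog : Tendsto (fun N : ℕ => log (N / d : ℕ) - log N) atTop (𝓝 (-log d)) := by
    have hx : Tendsto (fun N : ℕ => (N : ℝ) / d) atTop atTop :=
      tendsto_natCast_atTop_atTop.atTop_div_const (by positivity)
    have h := (tendsto_log_natFloor_sub_log.comp hx).sub_const (log d)
    rw [zero_sub] at h
    refine h.congr' ?_
    filter_upwards [eventually_ne_atTop 0] with N hN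
    rw [Function.comp_apply, Nat.floor_div_eq_div, log_div (by positivity) (by positivity)]
    ring
  have hγ := tendsto_harmonic_sub_log
  have h := ((hγ.comp (Nat.tendsto_div_const_atTop hd)).sub hγ).add hlog
  rw [sub_self, zero_add] at h
  exact h.congr fun N => by simp only [Function.comp_apply]; ring

section

variable {p : ℕ} {f : ℤ → ℤ}

lemma apply_natCast_eq
    (hf : ∀ n : ℤ, f n =
      if ¬ ((p : ℤ) ∣ n) then 1
      else if ¬ ((p ^ 2 : ℤ) ∣ n) then 1 - 2 * (p : ℤ)
      else ((p : ℤ) - 1) ^ 2) (n : ℕ) :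
    f n = 1 - 2 * p * (if p ∣ n then 1 else 0) + p ^ 2 * (if p ^ 2 ∣ n then 1 else 0) := by
  rw [hf]
  simp only [← Nat.cast_pow, Int.natCast_dvd_natCast]
  by_cases h2 : p ^ 2 ∣ n
  · simp only [(dvd_pow_self p two_ne_zero).trans h2, h2, not_true, if_false, if_true]
    push_cast
    ring
  · by_cases h1 : p ∣ n <;> simp [h1, h2]

lemma sum_Icc_apply_natCast_mul {R : Type*} [CommRing R]
    (hf : ∀ n : ℤ, f n =
      if ¬ ((p : ℤ) ∣ n) then 1
      else if ¬ ((p ^ 2 : ℤ) ∣ n) then 1 - 2 * (p : ℤ)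
      else ((p : ℤ) - 1) ^ 2) (g : ℕ → R) (N : ℕ) :
    ∑ n ∈ Icc 1 N, (f n : R) * g n = ∑ n ∈ Icc 1 N, g n
      - 2 * p * ∑ m ∈ Icc 1 (N / p), g (p * m) + p ^ 2 * ∑ m ∈ Icc 1 (N / p ^ 2), g (p ^ 2 * m) := by
  simp only [apply_natCast_eq hf]
  push_cast
  simp only [add_mul, sub_mul, mul_assoc, ite_mul, one_mul, zero_mul, sum_add_distrib,
    sum_sub_distrib, ← mul_sum, ← sum_filter, Nat.sum_Icc_filter_dvd]

lemma sum_Icc_sq_apply_natCast_eq_zero (hp : p ≠ 0)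
    (hf : ∀ n : ℤ, f n =
      if ¬ ((p : ℤ) ∣ n) then 1
      else if ¬ ((p ^ 2 : ℤ) ∣ n) then 1 - 2 * (p : ℤ)
      else ((p : ℤ) - 1) ^ 2) :
    ∑ a ∈ Icc 1 (p ^ 2), f a = 0 := by
  have h := sum_Icc_apply_natCast_mul hf (fun _ => (1 : ℤ)) (p ^ 2)
  simp only [Int.cast_id, mul_one, sum_const, Nat.card_Icc, add_tsub_cancel_right, nsmul_one] at h
  rw [h, Nat.div_self (by positivity), sq, Nat.mul_div_cancel_left p (Nat.pos_of_ne_zero hp)]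
  push_cast
  ring

lemma sum_Icc_apply_natCast_div_eq_harmonic (hp : p ≠ 0)
    (hf : ∀ n : ℤ, f n =
      if ¬ ((p : ℤ) ∣ n) then 1
      else if ¬ ((p ^ 2 : ℤ) ∣ n) then 1 - 2 * (p : ℤ)
      else ((p : ℤ) - 1) ^ 2) (N : ℕ) :
    ∑ n ∈ Icc 1 N, (f n : ℝ) / n =
      harmonic N - 2 * harmonic (N / p) + harmonic (N / p ^ 2) := by
  simp only [div_eq_mul_inv, sum_Icc_apply_natCast_mul hf, harmonic_eq_sum_Icc, Rat.cast_sum,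
    Rat.cast_inv, Rat.cast_natCast, Nat.cast_mul, Nat.cast_pow, mul_inv, ← mul_sum]
  have : (p : ℝ) ≠ 0 := by exact_mod_cast hp
  field_simp

end

theorem chowla_counterexample (p : ℕ) (hp : p.Prime) (f : ℤ → ℤ)
    (hf : ∀ n : ℤ, f n =
      if ¬ ((p : ℤ) ∣ n) then 1
      else if ¬ ((p ^ 2 : ℤ) ∣ n) then 1 - 2 * (p : ℤ)
      else ((p : ℤ) - 1) ^ 2) :
    (∑ a ∈ Finset.Icc 1 (p ^ 2), f a = 0) ∧
      Tendsto (fun N : ℕ => ∑ n ∈ Finset.Icc 1 N, (f n : ℝ) / n) atTop (nhds 0) := by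
  refine ⟨sum_Icc_sq_apply_natCast_eq_zero hp.ne_zero hf, ?_⟩
  have h := (tendsto_harmonic_div_sub_harmonic (pow_ne_zero 2 hp.ne_zero)).sub
    ((tendsto_harmonic_div_sub_harmonic hp.ne_zero).const_mul 2)
  convert h using 2 with N
  · rw [sum_Icc_apply_natCast_div_eq_harmonic hp.ne_zero hf]
    ring
  · rw [Nat.cast_pow, log_pow]
    ring
end

section
/- Fix q ≥ 2, a divisor d of q with 1 < d < q, and 1 ≤ c ≤ d−1. Define F_{d,c} : ℤ → ℚ, periodic mod q, by F_{d,c} = F^{(1)}_{d,c} − F^{(2)}_{d,c}, where F^{(1)}_{d,c}(x) = 1/2 if x ≡ c mod d and 0 otherwise, and F^{(2)}_{d,c}(x) = 1/2 if x ≡ (q/d)c mod q and 0 otherwise. Then the Fourier transform of F_{d,c} satisfies: for 1 ≤ y ≤ q, F̂_{d,c}(y) = ζ_q^{-cy}/(2d) − ζ_d^{-cy}/(2q) if (q/d) | y, and F̂_{d,c}(y) = −ζ_d^{-cy}/(2q) otherwise. -/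
/-!
`F` is `q`-periodic, so the sum over `1, …, q` may be taken over `0, …, q - 1` and then shifted
by `c`; the class of `c` mod `d` becomes the multiples `k d`, `k < q / d`, on which the kernel
`ζ ^ (-a y)` is `ζ ^ (-c y)` times a geometric series in `ζ ^ (-d y)`, a `(q / d)`-th root of
unity equal to `1` exactly when `q / d ∣ y`. The point mass at `(q / d) c` is the case `d = q`.
-/

open Finset Function

namespace Function.Periodic

variable {M : Type*} [AddCancelCommMonoid M] {g : ℕ → M} {q : ℕ}

theorem sum_range_add (hg : Periodic g q) (c : ℕ) :
    ∑ a ∈ range q, g (a + c) = ∑ a ∈ range q, g a := by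
  induction c with
  | zero => rfl
  | succ c ih =>
    -- both sides are `∑ a ∈ range (q + 1), g (a + c)` with one end term removed
    have hwrap : g (q + c) = g (0 + c) := by rw [add_comm q, zero_add, hg c]
    have h := (sum_range_succ' (fun a => g (a + c)) q).symm.trans
      (sum_range_succ (fun a => g (a + c)) q)
    rw [hwrap] at h
    simpa only [add_right_comm _ 1 c, add_assoc, ih] using add_right_cancel h

theorem sum_Icc_one (hg : Periodic g q) : ∑ a ∈ Icc 1 q, g a = ∑ a ∈ range q, g a := by
  rw [← Ico_add_one_right_eq_Icc, sum_Ico_eq_sum_range, Nat.add_sub_cancel, ← hg.sum_range_add 1]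
  simp only [add_comm 1]

end Function.Periodic

theorem Finset.filter_dvd_range_eq_image_mul {d q : ℕ} (hd : d ∣ q) :
    (range q).filter (d ∣ ·) = (range (q / d)).image (· * d) := by
  ext a
  simp only [mem_filter, mem_range, mem_image]
  constructor
  · rintro ⟨ha, k, rfl⟩
    exact ⟨k, (Nat.lt_div_iff_mul_lt' hd k).2 ha, mul_comm k d⟩
  · rintro ⟨k, hk, rfl⟩
    exact ⟨mul_comm d k ▸ (Nat.lt_div_iff_mul_lt' hd k).1 hk, dvd_mul_left d k⟩

namespace IsPrimitiveRoot

variable {K : Type*} [Field K] {ζ : K} {q : ℕ}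

theorem geom_sum_zpow (hζ : IsPrimitiveRoot ζ q) (j : ℤ) :
    ∑ k ∈ range q, (ζ ^ j) ^ k = if (q : ℤ) ∣ j then (q : K) else 0 := by
  split_ifs with h
  · simp [(hζ.zpow_eq_one_iff_dvd j).2 h]
  · have hpow : (ζ ^ j) ^ q = 1 := by
      rw [← zpow_natCast, ← zpow_mul, mul_comm, zpow_mul, zpow_natCast, hζ.pow_eq_one, one_zpow]
    rw [geom_sum_eq (mt (hζ.zpow_eq_one_iff_dvd j).1 h), hpow, sub_self, zero_div]

theorem periodic_zpow_neg_mul (hζ : IsPrimitiveRoot ζ q) (y : ℕ) :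
    Periodic (fun a : ℕ => ζ ^ (-(a : ℤ) * y)) q := by
  intro a
  rcases eq_or_ne q 0 with rfl | hq
  · rfl
  have hqy : ζ ^ (-(q : ℤ) * y) = 1 := (hζ.zpow_eq_one_iff_dvd _).2 ⟨-y, by ring⟩
  simp only [Nat.cast_add, neg_add, add_mul, zpow_add₀ (hζ.ne_zero hq), hqy, mul_one]

theorem sum_range_filter_dvd_sub_zpow (hζ : IsPrimitiveRoot ζ q) (hq : q ≠ 0) {d : ℕ}
    (hd : d ∣ q) (c y : ℕ) :
    ∑ a ∈ range q with (d : ℤ) ∣ ((a : ℕ) : ℤ) - c, ζ ^ (-(a : ℤ) * y) =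
      if q / d ∣ y then ((q / d : ℕ) : K) * ζ ^ (-(c : ℤ) * y) else 0 := by
  have hd0 : d ≠ 0 := by rintro rfl; exact hq (zero_dvd_iff.1 hd)
  have hperiodic : Periodic
      (fun a : ℕ => if (d : ℤ) ∣ a - c then ζ ^ (-(a : ℤ) * y) else 0) q := by
    intro a
    have he : ζ ^ (-((a + q : ℕ) : ℤ) * y) = ζ ^ (-(a : ℤ) * y) := hζ.periodic_zpow_neg_mul y a
    simp only [he]
    simp only [Nat.cast_add, add_sub_right_comm, dvd_add_left (Int.natCast_dvd_natCast.2 hd)]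
  have hprim : IsPrimitiveRoot (ζ ^ d) (q / d) :=
    hζ.pow (Nat.pos_of_ne_zero hq) (Nat.mul_div_cancel' hd).symm
  rw [sum_filter, ← hperiodic.sum_range_add c]
  simp only [Nat.cast_add, add_sub_cancel_right, Int.natCast_dvd_natCast]
  rw [← sum_filter, filter_dvd_range_eq_image_mul hd,
    sum_image fun k _ l _ h => Nat.eq_of_mul_eq_mul_right (Nat.pos_of_ne_zero hd0) h]
  have hterm : ∀ k : ℕ, ζ ^ (-(((k * d : ℕ) : ℤ) + c) * y) =
      ζ ^ (-(c : ℤ) * y) * ((ζ ^ d) ^ (-(y : ℤ))) ^ k := by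
    intro k
    rw [← zpow_natCast ζ d, ← zpow_mul, ← zpow_natCast _ k, ← zpow_mul, ← zpow_add₀ (hζ.ne_zero hq)]
    congr 1
    push_cast
    ring
  simp only [hterm, ← mul_sum, hprim.geom_sum_zpow, Int.dvd_neg, Int.natCast_dvd_natCast]
  split_ifs <;> ring

end IsPrimitiveRoot

theorem fourier_transform_of_F_general (q d : ℕ) (hq : 2 ≤ q) (hd : d ∣ q)
    (c : ℕ)
    (F : ℤ → ℂ)
    (hF : ∀ x : ℤ, F x =
      (if (d : ℤ) ∣ (x - c) then (1 : ℂ) / 2 else 0) -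
      (if (q : ℤ) ∣ (x - (q / d : ℕ) * c) then (1 : ℂ) / 2 else 0))
    (y : ℕ) :
    (1 / (q : ℂ)) * ∑ a ∈ Finset.Icc 1 q,
        F a * Complex.exp (2 * Real.pi * Complex.I / q) ^ (-(a : ℤ) * y) =
      if (q / d : ℕ) ∣ y then
        Complex.exp (2 * Real.pi * Complex.I / q) ^ (-(c : ℤ) * y) / (2 * d) -
          (Complex.exp (2 * Real.pi * Complex.I / q) ^ ((q / d : ℕ) : ℤ)) ^ (-(c : ℤ) * y) / (2 * q)
      else
        -(Complex.exp (2 * Real.pi * Complex.I / q) ^ ((q / d : ℕ) : ℤ)) ^ (-(c : ℤ) * y) / (2 * q) := by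
  have hq0 : q ≠ 0 := by omega
  set ζ := Complex.exp (2 * Real.pi * Complex.I / q)
  set m := q / d with hm
  have hζ : IsPrimitiveRoot ζ q := Complex.isPrimitiveRoot_exp q hq0
  have hF_periodic : Periodic (fun a : ℕ => F a) q := by
    intro a
    simp only [hF, Nat.cast_add, add_sub_right_comm _ (q : ℤ),
      dvd_add_left (Int.natCast_dvd_natCast.2 hd), dvd_add_left (dvd_refl (q : ℤ))]
  have hsummand : Periodic (fun a : ℕ => F a * ζ ^ (-(a : ℤ) * y)) q :=
    hF_periodic.mul (hζ.periodic_zpow_neg_mul y)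
  rw [hsummand.sum_Icc_one]
  simp only [hF, sub_mul, ite_mul, zero_mul, sum_sub_distrib, ← sum_filter, ← mul_sum]
  rw [hζ.sum_range_filter_dvd_sub_zpow hq0 hd, ← Nat.cast_mul,
    hζ.sum_range_filter_dvd_sub_zpow hq0 dvd_rfl, Nat.div_self (Nat.pos_of_ne_zero hq0)]
  have hpow : (ζ ^ (m : ℤ)) ^ (-(c : ℤ) * y) = ζ ^ (-((m * c : ℕ) : ℤ) * y) := by
    rw [← zpow_mul]
    push_cast
    ring_nf
  have hqdm : (q : ℂ) = d * m := by exact_mod_cast (Nat.mul_div_cancel' hd).symm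
  have hd0 : (d : ℂ) ≠ 0 := by rintro h; simp [h, hq0] at hqdm
  have hm0 : (m : ℂ) ≠ 0 := by rintro h; simp [h, hq0] at hqdm
  rw [← hm, hpow, if_pos (one_dvd y), Nat.cast_one, one_mul, hqdm]
  split_ifs
  · field_simp
  · ring

theorem fourier_transform_of_F (q d : ℕ) (hq : 2 ≤ q) (hd : d ∣ q)
    (hd1 : 1 < d) (hdq : d < q) (c : ℕ) (hc1 : 1 ≤ c) (hc2 : c ≤ d - 1)
    (F : ℤ → ℂ)
    (hF : ∀ x : ℤ, F x =
      (if (d : ℤ) ∣ (x - c) then (1 : ℂ) / 2 else 0) -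
      (if (q : ℤ) ∣ (x - (q / d : ℕ) * c) then (1 : ℂ) / 2 else 0))
    (y : ℕ) (hy1 : 1 ≤ y) (hy2 : y ≤ q) :
    (1 / (q : ℂ)) * ∑ a ∈ Finset.Icc 1 q,
        F a * Complex.exp (2 * Real.pi * Complex.I / q) ^ (-(a : ℤ) * y) =
      if (q / d : ℕ) ∣ y then
        Complex.exp (2 * Real.pi * Complex.I / q) ^ (-(c : ℤ) * y) / (2 * d) -
          (Complex.exp (2 * Real.pi * Complex.I / q) ^ ((q / d : ℕ) : ℤ)) ^ (-(c : ℤ) * y) / (2 * q)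
      else
        -(Complex.exp (2 * Real.pi * Complex.I / q) ^ ((q / d : ℕ) : ℤ)) ^ (-(c : ℤ) * y) / (2 * q) :=
  fourier_transform_of_F_general q d hq hd c F hF y
end
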